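/- Let c and d be positive integers and let n = cd + c − 1. Then the intervals [A, f_c(A)], as A ranges over all d-subsets of [n], are pairwise disjoint. -/

import Mathlib

open Fin.NatCast

/-- The clockwise arc of `l` consecutive points on the circular representation of `[n]`
(modelled as `Fin n`), starting at `s`. -/
def cArc (n : ℕ) [NeZero n] (s : Fin n) (l : ℕ) : Finset (Fin n) :=
  (Finset.range l).image (fun t : ℕ => s + (t : Fin n))

/-- The interval `[A,B] = {C : A ⊆ C ⊆ B}` in the Boolean lattice of subsets of `[n]`. -/
def fInterval {n : ℕ} (A B : Finset (Fin n)) : Finset (Finset (Fin n)) :=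
  B.powerset.filter (fun C => A ⊆ C)

/-- A block structure of `A ⊆ [n]` with respect to the density `δ`: a partition of the
circular representation of `[n]` into clockwise-consecutive blocks
`B₁, G₁, B₂, G₂, …, B_k, G_k` satisfying conditions (i)-(iv). Block `Bᵢ` is the arc of
length `blen i` starting at `bstart i`, and the gap `Gᵢ` is the arc of length `glen i`
immediately following `Bᵢ`. -/
structure BlockStructure (n : ℕ) [NeZero n] (δ : ℝ) (A : Finset (Fin n)) where
  k : ℕ
  kpos : 0 < k
  bstart : Fin k → Fin n
  blen : Fin k → ℕ
  glen : Fin k → ℕ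
  blen_pos : ∀ i, 0 < blen i
  /-- the blocks and gaps are clockwise-consecutive: `B_{i+1}` starts right after `Gᵢ` -/
  consec : ∀ i : Fin k,
    bstart ⟨(i.val + 1) % k, Nat.mod_lt _ kpos⟩ = bstart i + ((blen i + glen i : ℕ) : Fin n)
  /-- (i) the first element of each block lies in `A` -/
  start_mem : ∀ i, bstart i ∈ A
  /-- (ii) the gaps contain no element of `A` -/
  gap_inter : ∀ i, Disjoint (cArc n (bstart i + (blen i : Fin n)) (glen i)) A
  /-- the blocks and gaps cover `[n]` -/
  cover : ∀ x : Fin n,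
    (∃ i, x ∈ cArc n (bstart i) (blen i)) ∨
      (∃ i, x ∈ cArc n (bstart i + (blen i : Fin n)) (glen i))
  /-- distinct blocks are disjoint -/
  block_disj : ∀ i j, i ≠ j →
    Disjoint (cArc n (bstart i) (blen i)) (cArc n (bstart j) (blen j))
  /-- distinct gaps are disjoint -/
  gap_disj : ∀ i j, i ≠ j →
    Disjoint (cArc n (bstart i + (blen i : Fin n)) (glen i))
      (cArc n (bstart j + (blen j : Fin n)) (glen j))
  /-- blocks are disjoint from gaps -/
  block_gap_disj : ∀ i j,
    Disjoint (cArc n (bstart i) (blen i)) (cArc n (bstart j + (blen j : Fin n)) (glen j))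
  /-- (iii) lower density bound: `δ·|A ∩ Bᵢ| − 1 < |Bᵢ|` -/
  density_lb : ∀ i,
    δ * ((A ∩ cArc n (bstart i) (blen i)).card : ℝ) - 1 < ((cArc n (bstart i) (blen i)).card : ℝ)
  /-- (iii) upper density bound: `|Bᵢ| ≤ δ·|A ∩ Bᵢ|` -/
  density_ub : ∀ i,
    ((cArc n (bstart i) (blen i)).card : ℝ) ≤ δ * ((A ∩ cArc n (bstart i) (blen i)).card : ℝ)
  /-- (iv) every proper initial segment `[bᵢ,y] ⊊ Bᵢ` satisfies `|[bᵢ,y]| + 1 ≤ δ·|[bᵢ,y] ∩ A|` -/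
  initial_seg : ∀ i, ∀ t : ℕ, t + 1 < blen i →
    ((cArc n (bstart i) (t + 1)).card : ℝ) + 1 ≤ δ * (((cArc n (bstart i) (t + 1)) ∩ A).card : ℝ)

namespace BlockStructure

variable {n : ℕ} [NeZero n] {δ : ℝ} {A : Finset (Fin n)}

/-- The block `Bᵢ`. -/
def block (P : BlockStructure n δ A) (i : Fin P.k) : Finset (Fin n) :=
  cArc n (P.bstart i) (P.blen i)

/-- The gap `Gᵢ`. -/
def gap (P : BlockStructure n δ A) (i : Fin P.k) : Finset (Fin n) :=
  cArc n (P.bstart i + (P.blen i : Fin n)) (P.glen i)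

/-- `𝒢_δ(A) = G₁ ∪ ⋯ ∪ G_k`, the union of the gaps. -/
def gapsUnion (P : BlockStructure n δ A) : Finset (Fin n) :=
  Finset.univ.biUnion P.gap

/-- `f_δ(A) = A ∪ 𝒢_δ(A)`. -/
def fset (P : BlockStructure n δ A) : Finset (Fin n) :=
  A ∪ P.gapsUnion

end BlockStructure


/-!
Give each point `x` the weight `c·[x ∈ A] + [x ∈ 𝒢_c(A)] − 1`. Gap points have weight `0` and,
by (iii), every block has total weight `0`, so the weights sum to zero around the circle and
admit a potential `height`. By (iv) the height never drops below its common value at the block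
starts, and it keeps that value along the gaps. Hence a clockwise arc ending in a gap has weight
`≤ 0`, and an arc starting in a gap and ending in `A` has weight `≥ c − 1`.

If `C ∈ [A, f_c(A)] ∩ [A', f_c(A')]`, then `A' \ A ⊆ 𝒢_c(A)` and `A \ A' ⊆ 𝒢_c(A')`. Walk
clockwise from some `a ∈ A \ A'` to the first `a' ∈ A' \ A`. The arc `[a, a']` has weight `≤ 0`
for `A` and `≥ c − 1` for `A'`; but it meets `A'` at most as often as `A`, meets `𝒢_c(A)` in `a'`,
and meets `𝒢_c(A')` fewer than `c` times, since `|𝒢_c(A')| = n − c·d = c − 1`.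
-/

open Finset

section Potential

variable {n : ℕ} [NeZero n]

def potential (w : Fin n → ℤ) (x : Fin n) : ℤ :=
  ∑ t ∈ range x.val, w t

variable {w : Fin n → ℤ}

theorem potential_add_one (hw : ∑ x, w x = 0) (x : Fin n) :
    potential w (x + 1) = potential w x + w x := by
  by_cases hx : x.val + 1 < n
  · rw [potential, Fin.val_add_one_of_lt' hx, sum_range_succ, Fin.cast_val_eq_self, potential]
  · have hxn : x.val + 1 = n := by omega
    have hx0 : x + 1 = 0 := Fin.ext (by rw [Fin.val_add, Fin.val_one', Nat.add_mod_mod, hxn]; simp)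
    have hsum : ∑ t ∈ range (x.val + 1), w t = 0 := by
      rw [show range (x.val + 1) = range n by rw [hxn], ← hw,
        ← Fin.sum_univ_eq_sum_range (fun t : ℕ => w t)]
      simp only [Fin.cast_val_eq_self]
    rw [hx0, potential, potential, Fin.val_zero, sum_range_zero, ← hsum, sum_range_succ,
      Fin.cast_val_eq_self]

theorem potential_add_natCast (hw : ∑ x, w x = 0) (s : Fin n) (l : ℕ) :
    potential w (s + l) = potential w s + ∑ t ∈ range l, w (s + t) := by
  induction l with
  | zero => simp
  | succ l ih =>
    rw [sum_range_succ, ← add_assoc, ← ih, ← potential_add_one hw, Nat.cast_succ, add_assoc]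

end Potential

section Arc

variable {n : ℕ} [NeZero n] {s x : Fin n} {l : ℕ}

theorem mem_cArc : x ∈ cArc n s l ↔ ∃ t < l, s + t = x := by
  simp [cArc]

theorem mem_cArc_of_le (hl : n ≤ l) (s x : Fin n) : x ∈ cArc n s l :=
  mem_cArc.2 ⟨(x - s).val, (x - s).isLt.trans_le hl, by rw [Fin.cast_val_eq_self]; abel⟩

theorem injOn_add_natCast (hl : l ≤ n) :
    Set.InjOn (fun t : ℕ => s + (t : Fin n)) (range l) := by
  intro t₁ h₁ t₂ h₂ h
  simp only [coe_range, Set.mem_Iio] at h₁ h₂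
  have := congrArg Fin.val (add_left_cancel h)
  rwa [Fin.val_natCast, Fin.val_natCast, Nat.mod_eq_of_lt (by omega),
    Nat.mod_eq_of_lt (by omega)] at this

theorem card_cArc (hl : l ≤ n) : #(cArc n s l) = l := by
  rw [cArc, card_image_of_injOn (injOn_add_natCast hl), card_range]

theorem sum_cArc {M : Type*} [AddCommMonoid M] (hl : l ≤ n) (f : Fin n → M) :
    ∑ x ∈ cArc n s l, f x = ∑ t ∈ range l, f (s + t) :=
  sum_image (injOn_add_natCast hl)

end Arc

namespace BlockStructure

variable {n c : ℕ} [NeZero n] {A : Finset (Fin n)} (P : BlockStructure n c A) {x : Fin n}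

theorem mem_gapsUnion : x ∈ P.gapsUnion ↔ ∃ i, x ∈ P.gap i := by
  simp [gapsUnion]

theorem notMem_gapsUnion_of_mem (hx : x ∈ A) : x ∉ P.gapsUnion := by
  rw [mem_gapsUnion]
  rintro ⟨i, hi⟩
  exact disjoint_left.1 (P.gap_inter i) hi hx

theorem disjoint_block_gapsUnion (i : Fin P.k) : Disjoint (P.block i) P.gapsUnion := by
  rw [gapsUnion, disjoint_biUnion_right]
  exact fun j _ => P.block_gap_disj i j

theorem card_block (i : Fin P.k) : #(P.block i) = c * #(P.block i ∩ A) := by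
  have lb := sub_lt_iff_lt_add.1 (P.density_lb i)
  have ub := P.density_ub i
  rw [block, inter_comm]
  norm_cast at lb ub
  omega

theorem blen_lt (hG : P.gapsUnion.Nonempty) (i : Fin P.k) : P.blen i < n := by
  by_contra! h
  obtain ⟨x, hx⟩ := hG
  exact disjoint_left.1 (P.disjoint_block_gapsUnion i) (mem_cArc_of_le h _ x) hx

def weight (x : Fin n) : ℤ :=
  c * (if x ∈ A then 1 else 0) + (if x ∈ P.gapsUnion then 1 else 0) - 1

theorem sum_weight (X : Finset (Fin n)) :
    ∑ x ∈ X, P.weight x = c * #(X ∩ A) + #(X ∩ P.gapsUnion) - #X := by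
  simp [weight, sum_add_distrib, sum_sub_distrib, mul_comm]

theorem weight_of_mem (hx : x ∈ A) : P.weight x = c - 1 := by
  simp [weight, hx, P.notMem_gapsUnion_of_mem hx]

theorem weight_of_mem_gapsUnion (hx : x ∈ P.gapsUnion) : P.weight x = 0 := by
  have : x ∉ A := fun h => P.notMem_gapsUnion_of_mem h hx
  simp [weight, hx, this]

theorem sum_weight_block (i : Fin P.k) : ∑ x ∈ P.block i, P.weight x = 0 := by
  rw [sum_weight, disjoint_iff_inter_eq_empty.1 (P.disjoint_block_gapsUnion i), card_block]
  simp

theorem sum_weight_univ : ∑ x, P.weight x = 0 := by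
  have hcover : univ.biUnion P.block ∪ P.gapsUnion = univ := by
    refine eq_univ_of_forall fun x => ?_
    rcases P.cover x with ⟨i, hi⟩ | ⟨i, hi⟩
    · exact mem_union_left _ (mem_biUnion.2 ⟨i, mem_univ _, hi⟩)
    · exact mem_union_right _ (P.mem_gapsUnion.2 ⟨i, hi⟩)
  have hdisj : Disjoint (univ.biUnion P.block) P.gapsUnion :=
    (disjoint_biUnion_left _ _ _).2 fun i _ => P.disjoint_block_gapsUnion i
  rw [← hcover, sum_union hdisj, sum_biUnion (t := P.block) fun i _ j _ hij => P.block_disj i j hij,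
    sum_eq_zero fun i _ => P.sum_weight_block i,
    sum_eq_zero fun x hx => P.weight_of_mem_gapsUnion hx, add_zero]

theorem card_gapsUnion : c * #A + #P.gapsUnion = n := by
  have := P.sum_weight_univ
  rw [sum_weight, univ_inter, univ_inter, card_univ, Fintype.card_fin] at this
  omega

theorem sum_range_weight {l : ℕ} (hl : l ≤ n) (s : Fin n) :
    ∑ t ∈ range l, P.weight (s + t) = c * #(cArc n s l ∩ A) + #(cArc n s l ∩ P.gapsUnion) - l := by
  rw [← sum_cArc hl, sum_weight, card_cArc hl]

def height : Fin n → ℤ :=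
  potential P.weight

def baseHeight : ℤ :=
  P.height (P.bstart ⟨0, P.kpos⟩)

theorem height_add_natCast (s : Fin n) (l : ℕ) :
    P.height (s + l) = P.height s + ∑ t ∈ range l, P.weight (s + t) :=
  potential_add_natCast P.sum_weight_univ s l

theorem height_add_one (x : Fin n) : P.height (x + 1) = P.height x + P.weight x :=
  potential_add_one P.sum_weight_univ x

theorem height_bstart_le (hG : P.gapsUnion.Nonempty) {i : Fin P.k} {t : ℕ} (ht : t < P.blen i) :
    P.height (P.bstart i) ≤ P.height (P.bstart i + t) := by
  obtain _ | t := t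
  · simp
  have hseg := P.initial_seg i t ht
  rw [card_cArc (ht.trans (P.blen_lt hG i)).le] at hseg
  have : t + 1 + 1 ≤ c * #(cArc n (P.bstart i) (t + 1) ∩ A) := by exact_mod_cast hseg
  rw [height_add_natCast, sum_range_weight _ (ht.trans (P.blen_lt hG i)).le]
  omega

theorem height_bstart_add_blen (hG : P.gapsUnion.Nonempty) (i : Fin P.k) :
    P.height (P.bstart i + P.blen i) = P.height (P.bstart i) := by
  rw [height_add_natCast, ← sum_cArc (P.blen_lt hG i).le, ← block, sum_weight_block, add_zero]

theorem height_gap (i : Fin P.k) {p : ℕ} (hp : p ≤ P.glen i) :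
    P.height (P.bstart i + P.blen i + p) = P.height (P.bstart i + P.blen i) := by
  rw [height_add_natCast, sum_eq_zero, add_zero]
  intro t ht
  exact P.weight_of_mem_gapsUnion
    (P.mem_gapsUnion.2 ⟨i, mem_cArc.2 ⟨t, (mem_range.1 ht).trans_le hp, rfl⟩⟩)

theorem height_bstart (hG : P.gapsUnion.Nonempty) (i : Fin P.k) :
    P.height (P.bstart i) = P.baseHeight := by
  obtain ⟨m, hm⟩ := i
  induction m with
  | zero => rfl
  | succ m ih =>
    have hnext := P.consec ⟨m, by omega⟩
    rw [show (⟨(m + 1) % P.k, _⟩ : Fin P.k) = ⟨m + 1, hm⟩ from Fin.ext (Nat.mod_eq_of_lt hm),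
      Nat.cast_add, ← add_assoc] at hnext
    rw [hnext, height_gap _ _ le_rfl, height_bstart_add_blen _ hG, ih]

theorem height_gap_eq (hG : P.gapsUnion.Nonempty) (i : Fin P.k) {p : ℕ} (hp : p ≤ P.glen i) :
    P.height (P.bstart i + P.blen i + p) = P.baseHeight := by
  rw [height_gap _ _ hp, height_bstart_add_blen _ hG, height_bstart _ hG]

theorem height_of_mem_gapsUnion (hx : x ∈ P.gapsUnion) : P.height x = P.baseHeight := by
  obtain ⟨i, hi⟩ := P.mem_gapsUnion.1 hx
  obtain ⟨p, hp, rfl⟩ := mem_cArc.1 hi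
  exact P.height_gap_eq ⟨_, hx⟩ i hp.le

theorem height_add_one_of_mem_gapsUnion (hx : x ∈ P.gapsUnion) :
    P.height (x + 1) = P.baseHeight := by
  obtain ⟨i, hi⟩ := P.mem_gapsUnion.1 hx
  obtain ⟨p, hp, rfl⟩ := mem_cArc.1 hi
  rw [add_assoc, ← Nat.cast_succ, P.height_gap_eq ⟨_, hx⟩ i hp]

theorem baseHeight_le_height (hG : P.gapsUnion.Nonempty) (x : Fin n) :
    P.baseHeight ≤ P.height x := by
  rcases P.cover x with ⟨i, hi⟩ | ⟨i, hi⟩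
  · obtain ⟨t, ht, rfl⟩ := mem_cArc.1 hi
    exact P.height_bstart hG i ▸ P.height_bstart_le hG ht
  · exact (P.height_of_mem_gapsUnion (P.mem_gapsUnion.2 ⟨i, hi⟩)).ge

theorem sum_range_weight_nonpos {s : Fin n} {l : ℕ} (hl : s + l ∈ P.gapsUnion) :
    ∑ t ∈ range (l + 1), P.weight (s + t) ≤ 0 := by
  have := P.height_add_natCast s (l + 1)
  rw [Nat.cast_succ, ← add_assoc, P.height_add_one_of_mem_gapsUnion hl] at this
  linarith [P.baseHeight_le_height ⟨_, hl⟩ s]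

theorem le_sum_range_weight {s : Fin n} {l : ℕ} (hs : s ∈ P.gapsUnion) (hl : s + l ∈ A) :
    c - 1 ≤ ∑ t ∈ range (l + 1), P.weight (s + t) := by
  have := P.height_add_natCast s (l + 1)
  rw [Nat.cast_succ, ← add_assoc, P.height_add_one, P.weight_of_mem hl,
    P.height_of_mem_gapsUnion hs] at this
  linarith [P.baseHeight_le_height ⟨_, hs⟩ (s + l)]

end BlockStructure

theorem exists_min_add_natCast_mem {n : ℕ} [NeZero n] {X : Finset (Fin n)} (hX : X.Nonempty)
    (a : Fin n) : ∃ t < n, a + t ∈ X ∧ ∀ u < t, a + (u : Fin n) ∉ X := by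
  obtain ⟨x, hx⟩ := hX
  have h : ∃ t, t < n ∧ a + (t : Fin n) ∈ X :=
    ⟨(x - a).val, (x - a).isLt, by rwa [Fin.cast_val_eq_self, add_sub_cancel]⟩
  exact ⟨Nat.find h, (Nat.find_spec h).1, (Nat.find_spec h).2,
    fun u hu hmem => Nat.find_min h hu ⟨hu.trans (Nat.find_spec h).1, hmem⟩⟩

theorem BlockStructure.not_sdiff_subset_gapsUnion {n c : ℕ} [NeZero n] {A A' : Finset (Fin n)}
    (P : BlockStructure n c A) (P' : BlockStructure n c A') (hG' : #P'.gapsUnion < c)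
    (hA : (A \ A').Nonempty) (hA' : (A' \ A).Nonempty) (h' : A \ A' ⊆ P'.gapsUnion) :
    ¬ A' \ A ⊆ P.gapsUnion := by
  intro h
  obtain ⟨a, ha⟩ := hA
  obtain ⟨t, htn, ht, hmin⟩ := exists_min_add_natCast_mem hA' a
  set I := cArc n a (t + 1)
  have hle := P.sum_range_weight_nonpos (h ht)
  have hge := P'.le_sum_range_weight (h' ha) (mem_sdiff.1 ht).1
  rw [P.sum_range_weight htn] at hle
  rw [P'.sum_range_weight htn] at hge
  -- `a + t` is the only point of `I` in `A' \ A`, and `a ∈ I` lies in `A \ A'`.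
  have hAA' : #(I ∩ A') ≤ #(I ∩ A) := by
    refine card_sdiff_le_card_sdiff_iff.1 ((card_le_card (t := {a + t}) ?_).trans
      (one_le_card.2 ⟨a, ?_⟩))
    · intro x hx
      obtain ⟨⟨hxI, hxA'⟩, hxA⟩ : (x ∈ I ∧ x ∈ A') ∧ ¬(x ∈ I ∧ x ∈ A) := by simpa using hx
      obtain ⟨u, hu, rfl⟩ := mem_cArc.1 hxI
      obtain rfl : u = t := by
        by_contra hne
        exact hmin u (by omega) (mem_sdiff.2 ⟨hxA', fun h => hxA ⟨hxI, h⟩⟩)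
      exact mem_singleton_self _
    · have haI : a ∈ I := mem_cArc.2 ⟨0, by omega, by simp⟩
      simp [haI, (mem_sdiff.1 ha).1, (mem_sdiff.1 ha).2]
  have hmul : (c * #(I ∩ A') : ℤ) ≤ c * #(I ∩ A) := by exact_mod_cast Nat.mul_le_mul_left c hAA'
  have hIG' : (#(I ∩ P'.gapsUnion) : ℤ) < c := by
    exact_mod_cast (card_le_card inter_subset_right).trans_lt hG'
  have hIG : (0 : ℤ) < #(I ∩ P.gapsUnion) := by
    exact_mod_cast card_pos.2 ⟨a + t, mem_inter.2 ⟨mem_cArc.2 ⟨t, by omega, rfl⟩, h ht⟩⟩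
  linarith

theorem intervals_pairwise_disjoint_general (c d n : ℕ) (hc : 0 < c)
    (hn : n = c * d + c - 1) [NeZero n]
    (F : Finset (Fin n) → Finset (Fin n))
    (hF : ∀ A : Finset (Fin n), A.card = d → ∃ P : BlockStructure n (c : ℝ) A, F A = P.fset)
    (A A' : Finset (Fin n)) (hA : A.card = d) (hA' : A'.card = d) (hne : A ≠ A') :
    Disjoint (fInterval A (F A)) (fInterval A' (F A')) := by
  obtain ⟨P, hP⟩ := hF A hA
  obtain ⟨P', hP'⟩ := hF A' hA'
  have hG' : #P'.gapsUnion < c := by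
    have := P'.card_gapsUnion
    rw [hA'] at this
    omega
  rw [disjoint_left]
  intro C hC hC'
  simp only [fInterval, mem_filter, mem_powerset, hP, hP', BlockStructure.fset] at hC hC'
  refine P.not_sdiff_subset_gapsUnion P' hG' ?_ ?_ (sdiff_le_iff.2 (hC.2.trans hC'.1))
    (sdiff_le_iff.2 (hC'.2.trans hC.1))
  · exact sdiff_nonempty.2 fun hsub => hne (eq_of_subset_of_card_le hsub (by rw [hA, hA']))
  · exact sdiff_nonempty.2 fun hsub => hne (eq_of_subset_of_card_le hsub (by rw [hA, hA'])).symm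

/-- Let `c, d` be positive integers and `n = cd + c − 1`. Then the intervals
`[A, f_c(A)]`, as `A` ranges over the `d`-subsets of `[n]`, are pairwise disjoint. Here `F`
assigns to each `d`-subset `A` the set `f_c(A)` coming from a block structure of `A` with
density `c`. -/
theorem intervals_pairwise_disjoint (c d n : ℕ) (hc : 0 < c) (hd : 0 < d)
    (hn : n = c * d + c - 1) [NeZero n]
    (F : Finset (Fin n) → Finset (Fin n))
    (hF : ∀ A : Finset (Fin n), A.card = d → ∃ P : BlockStructure n (c : ℝ) A, F A = P.fset)
    (A A' : Finset (Fin n)) (hA : A.card = d) (hA' : A'.card = d) (hne : A ≠ A') :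
    Disjoint (fInterval A (F A)) (fInterval A' (F A')) :=
  intervals_pairwise_disjoint_general c d n hc hn F hF A A' hA hA' hne
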